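/- arXiv:2511.10239 — 3 statements merged into one kernel-verified Lean document; each statement's English description precedes it below -/
import Mathlib

section
/- Let (β_k) be the Nesterov momentum sequence with β_0 > 0 and β_{k+1} = (1 + √(1 + 4β_k²))/2. If k ≥ k_0 := 2/log(3/2), then (3(β_{k+1}/β_k)² − 1)^{-1} ≤ exp(−2/k). Consequently the sequence μ_{k+1} = μ_k (3(β_{k+1}/β_k)² − 1)^{-1} with μ_0 > 0 satisfies μ_k ≤ C/k² for some constant C > 0 and all k ≥ 1. -/
lemma sq_le_two_pow_aux (k : ℕ) : k ^ 2 ≤ 2 ^ (k + 2) := by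
  induction k with
  | zero => norm_num
  | succ n ih =>
    have h1 : n + 1 ≤ 2 ^ (n + 1) := (Nat.lt_two_pow_self (n := n+1)).le
    have : (n + 1) ^ 2 = n ^ 2 + (2 * n + 1) := by ring
    have h2 : 2 * n + 1 ≤ 2 ^ (n + 2) := by
      calc 2 * n + 1 ≤ 2 * (n + 1) := by omega
        _ ≤ 2 * 2 ^ (n + 1) := by omega
        _ = 2 ^ (n + 2) := by ring
    calc (n + 1) ^ 2 = n ^ 2 + (2 * n + 1) := by ring
      _ ≤ 2 ^ (n + 2) + 2 ^ (n + 2) := Nat.add_le_add ih h2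
      _ = 2 ^ (n + 3) := by ring

/-- For the Nesterov momentum sequence, if `k ≥ 2 / log(3/2)` then
`(3 (β_{k+1}/β_k)² − 1)⁻¹ ≤ exp(−2/k)`, and consequently the smoothing sequence
`μ_{k+1} = μ_k (3 (β_{k+1}/β_k)² − 1)⁻¹` with `μ_0 > 0` satisfies `μ_k ≤ C / k²`
for some constant `C > 0` and all `k ≥ 1`. -/
theorem smoothing_transient_rate (β μ : ℕ → ℝ) (hβ0 : 0 < β 0)
    (hrec : ∀ k, β (k + 1) = (1 + Real.sqrt (1 + 4 * (β k) ^ 2)) / 2)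
    (hμ0 : 0 < μ 0)
    (hμ : ∀ k, μ (k + 1) = μ k * (3 * (β (k + 1) / β k) ^ 2 - 1)⁻¹) :
    (∀ k : ℕ, 2 / Real.log (3 / 2) ≤ (k : ℝ) →
      (3 * (β (k + 1) / β k) ^ 2 - 1)⁻¹ ≤ Real.exp (-2 / (k : ℝ))) ∧
      (∃ C : ℝ, 0 < C ∧ ∀ k : ℕ, 1 ≤ k → μ k ≤ C / (k : ℝ) ^ 2) := by
  have hβpos : ∀ k, 0 < β k := by
    intro k
    induction k with
    | zero => exact hβ0
    | succ n ih =>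
      rw [hrec]
      have := Real.sqrt_nonneg (1 + 4 * (β n) ^ 2)
      linarith
  have hβmono : ∀ k, β k ≤ β (k + 1) := by
    intro k
    rw [hrec]
    have h1 : 2 * β k ≤ Real.sqrt (1 + 4 * β k ^ 2) := by
      have h2 : (2 * β k) = Real.sqrt ((2 * β k) ^ 2) :=
        (Real.sqrt_sq (by linarith [hβpos k] : (0:ℝ) ≤ 2 * β k)).symm
      rw [h2]
      apply Real.sqrt_le_sqrt
      nlinarith
    linarith
  have h2le : ∀ k, (2:ℝ) ≤ 3 * (β (k + 1) / β k) ^ 2 - 1 := by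
    intro k
    have h1 : (1:ℝ) ≤ β (k + 1) / β k := (one_le_div (hβpos k)).2 (hβmono k)
    nlinarith
  have hfac : ∀ k, (3 * (β (k + 1) / β k) ^ 2 - 1)⁻¹ ≤ 1 / 2 := by
    intro k
    rw [inv_le_comm₀ (by linarith [h2le k]) (by norm_num)]
    linarith [h2le k]
  have hfacpos : ∀ k, 0 < (3 * (β (k + 1) / β k) ^ 2 - 1)⁻¹ := by
    intro k
    exact inv_pos.2 (by linarith [h2le k])
  have hμpos : ∀ k, 0 < μ k := by
    intro k
    induction k with
    | zero => exact hμ0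
    | succ n ih => rw [hμ]; exact mul_pos ih (hfacpos n)
  have hμbound : ∀ k, μ k ≤ μ 0 / 2 ^ k := by
    intro k
    induction k with
    | zero => simp
    | succ n ih =>
      rw [hμ]
      calc μ n * (3 * (β (n + 1) / β n) ^ 2 - 1)⁻¹
          ≤ μ n * (1 / 2) := by
            exact mul_le_mul_of_nonneg_left (hfac n) (le_of_lt (hμpos n))
        _ ≤ (μ 0 / 2 ^ n) * (1 / 2) := by
            apply mul_le_mul_of_nonneg_right ih; norm_num
        _ = μ 0 / 2 ^ (n + 1) := by ring
  constructor
  · intro k hk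
    have hlog : 0 < Real.log (3 / 2) := Real.log_pos (by norm_num)
    have hk0 : 0 < (k : ℝ) := lt_of_lt_of_le (by positivity) hk
    have h2 : 2 ≤ (k : ℝ) * Real.log (3 / 2) := (div_le_iff₀ hlog).1 hk
    have h3 : 2 / (k : ℝ) ≤ Real.log (3 / 2) := (div_le_iff₀ hk0).2 (by nlinarith)
    have h4 : -Real.log (3 / 2) ≤ -2 / (k : ℝ) := by
      rw [neg_div]; linarith
    have h5 : Real.exp (-Real.log (3 / 2)) = 2 / 3 := by
      rw [Real.exp_neg, Real.exp_log (by norm_num : (0:ℝ) < 3 / 2)]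
      norm_num
    calc (3 * (β (k + 1) / β k) ^ 2 - 1)⁻¹ ≤ 1 / 2 := hfac k
      _ ≤ 2 / 3 := by norm_num
      _ = Real.exp (-Real.log (3 / 2)) := h5.symm
      _ ≤ Real.exp (-2 / (k : ℝ)) := Real.exp_le_exp.2 h4
  · refine ⟨4 * μ 0, by linarith, ?_⟩
    intro k hk
    have hk0 : 0 < (k : ℝ) := by exact_mod_cast Nat.pos_of_ne_zero (by omega)
    have hnat : (k : ℝ) ^ 2 ≤ 4 * 2 ^ k := by
      have := sq_le_two_pow_aux k
      have h : ((k ^ 2 : ℕ) : ℝ) ≤ ((2 ^ (k + 2) : ℕ) : ℝ) := by exact_mod_cast this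
      push_cast at h
      have h2 : (2:ℝ) ^ (k + 2) = 4 * 2 ^ k := by rw [pow_add]; ring
      linarith [h, h2.le]
    calc μ k ≤ μ 0 / 2 ^ k := hμbound k
      _ ≤ 4 * μ 0 / (k : ℝ) ^ 2 := by
          rw [div_le_div_iff₀ (by positivity) (by positivity)]
          nlinarith [hnat, hμ0.le]
end

section
/- Let f : ℝⁿ → ℝ be convex and continuous, and let f_μ be its Moreau envelope with parameter μ > 0. Then f_μ is differentiable and its gradient satisfies ∇f_μ(x) = (x − prox_{μf}(x))/μ, where prox_{μf}(x) is the unique minimizer of y ↦ f(y) + (1/(2μ))‖y − x‖². -/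
open scoped RealInnerProductSpace

section aux
variable {n : ℕ}
local notation "E" => EuclideanSpace ℝ (Fin n)

lemma combo_norm_sq (a b : E) (t : ℝ) :
    ‖(1-t)•a + t•b‖^2 = (1-t)*‖a‖^2 + t*‖b‖^2 - t*(1-t)*‖a-b‖^2 := by
  have h : ∀ v : E, ‖v‖^2 = ⟪v,v⟫ := fun v => (real_inner_self_eq_norm_sq v).symm
  simp only [h, inner_add_left, inner_add_right, inner_sub_left, inner_sub_right,
    real_inner_smul_left, real_inner_smul_right, real_inner_comm b a]
  ring

lemma strong_min (f : E → ℝ) (hconv : ConvexOn ℝ Set.univ f) (c : ℝ) (hc : 0 < c)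
    (x p : E) (hp : IsMinOn (fun y => f y + c*‖y-x‖^2) Set.univ p) (y : E) :
    f p + c*‖p-x‖^2 + c*‖y-p‖^2 ≤ f y + c*‖y-x‖^2 := by
  have key : ∀ t ∈ Set.Ioo (0:ℝ) 1,
      f p + c*‖p-x‖^2 + (1-t)*(c*‖y-p‖^2) ≤ f y + c*‖y-x‖^2 := by
    intro t ht
    have hmem := isMinOn_iff.mp hp ((1-t)•p + t•y) trivial
    have hf : f ((1-t)•p + t•y) ≤ (1-t)*f p + t*f y :=
      hconv.2 trivial trivial (by linarith [ht.2]) ht.1.le (by ring)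
    have he : (1-t)•(p-x) + t•(y-x) = ((1-t)•p + t•y) - x := by
      rw [smul_sub, smul_sub]
      rw [show ((1-t)•p + t•y) - x = (1-t)•p + t•y - ((1-t)•x + t•x) by
        rw [← add_smul]; ring_nf; module]
      abel
    have hn : ‖((1-t)•p + t•y) - x‖^2
        = (1-t)*‖p-x‖^2 + t*‖y-x‖^2 - t*(1-t)*‖y-p‖^2 := by
      rw [← he, combo_norm_sq]
      rw [show (p-x)-(y-x) = p - y by abel, norm_sub_rev p y]
    rw [hn] at hmem
    have ht0 := ht.1
    nlinarith [hmem, hf, mul_pos ht.1 hc]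
  have htend : Filter.Tendsto (fun t : ℝ => f p + c*‖p-x‖^2 + (1-t)*(c*‖y-p‖^2))
      (nhdsWithin 0 (Set.Ioi 0)) (nhds (f p + c*‖p-x‖^2 + c*‖y-p‖^2)) := by
    have hcont2 : Continuous (fun t : ℝ => f p + c*‖p-x‖^2 + (1-t)*(c*‖y-p‖^2)) := by
      continuity
    have := Filter.Tendsto.mono_left (hcont2.tendsto 0)
      (nhdsWithin_le_nhds (s := Set.Ioi (0:ℝ)))
    simpa using this
  refine le_of_tendsto htend ?_
  exact Filter.eventually_of_mem (Ioo_mem_nhdsGT_of_mem (by norm_num : (0:ℝ) ∈ Set.Ico 0 1))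
    (fun t ht => key t ht)
end aux

/-- The Moreau envelope `f_μ` of a convex continuous function is differentiable with
gradient `∇f_μ(x) = (x − prox_{μf}(x))/μ`, where `prox_{μf}(x)` is the unique minimizer
of `y ↦ f(y) + (1/(2μ))‖y − x‖²`. -/
theorem moreau_envelope_gradient {n : ℕ}
    (f fμ : EuclideanSpace ℝ (Fin n) → ℝ)
    (prox : EuclideanSpace ℝ (Fin n) → EuclideanSpace ℝ (Fin n))
    (μ : ℝ) (hμ : 0 < μ)
    (hconv : ConvexOn ℝ Set.univ f) (hcont : Continuous f)
    (hfμ : ∀ x, fμ x = ⨅ y, f y + 1 / (2 * μ) * ‖y - x‖ ^ 2)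
    (hprox : ∀ x, IsMinOn (fun y => f y + 1 / (2 * μ) * ‖y - x‖ ^ 2) Set.univ (prox x))
    (huniq : ∀ x y, IsMinOn (fun y' => f y' + 1 / (2 * μ) * ‖y' - x‖ ^ 2) Set.univ y →
      y = prox x) :
    ∀ x, HasGradientAt fμ (μ⁻¹ • (x - prox x)) x := by
  set c : ℝ := 1 / (2 * μ) with hcdef
  have hc : 0 < c := by positivity
  -- value of the envelope
  have hval : ∀ z, fμ z = f (prox z) + c * ‖prox z - z‖ ^ 2 := by
    intro z
    rw [hfμ]
    apply le_antisymm
    · exact ciInf_le ⟨f (prox z) + c * ‖prox z - z‖^2,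
        by rintro v ⟨y, rfl⟩; exact isMinOn_iff.mp (hprox z) y trivial⟩ (prox z)
    · exact le_ciInf (fun y => isMinOn_iff.mp (hprox z) y trivial)
  -- one-sided quadratic upper bound
  have upper : ∀ z w : EuclideanSpace ℝ (Fin n),
      fμ w - fμ z - ⟪μ⁻¹ • (z - prox z), w - z⟫ ≤ c * ‖w - z‖^2 := by
    intro z w
    set p := prox z with hp
    have h1 : fμ w ≤ f p + c * ‖p - w‖^2 := by
      rw [hfμ]
      exact ciInf_le ⟨f (prox w) + c * ‖prox w - w‖^2,
        by rintro v ⟨y, rfl⟩; exact isMinOn_iff.mp (hprox w) y trivial⟩ p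
    have h2 : fμ z = f p + c * ‖p - z‖^2 := hval z
    have h3 : ‖p - w‖^2 = ‖p - z‖^2 - 2*⟪p - z, w - z⟫ + ‖w - z‖^2 := by
      rw [show p - w = (p - z) - (w - z) by abel]
      rw [norm_sub_sq_real]
    have h4 : ⟪μ⁻¹ • (z - p), w - z⟫ = -(2*c) * ⟪p - z, w - z⟫ := by
      rw [real_inner_smul_left, show z - p = -(p - z) by abel, inner_neg_left]
      rw [hcdef]; field_simp
    have h3' : c * ‖p - w‖^2
        = c * ‖p - z‖^2 - 2*c*⟪p - z, w - z⟫ + c*‖w - z‖^2 := by rw [h3]; ring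
    linarith [h1, h3', h4]
  -- firm nonexpansiveness
  have firm : ∀ z w : EuclideanSpace ℝ (Fin n),
      ‖prox w - prox z‖^2 ≤ ⟪prox w - prox z, w - z⟫ := by
    intro z w
    set p := prox z with hp
    set q := prox w with hq
    have hpz : IsMinOn (fun y => f y + c*‖y-z‖^2) Set.univ p := hprox z
    have hqw : IsMinOn (fun y => f y + c*‖y-w‖^2) Set.univ q := hprox w
    have h1 := strong_min f hconv c hc z p hpz q
    have h2 := strong_min f hconv c hc w q hqw p
    have hid : ‖q-z‖^2 + ‖p-w‖^2 - ‖p-z‖^2 - ‖q-w‖^2 = 2*⟪q-p, w-z⟫ := by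
      have h : ∀ v : EuclideanSpace ℝ (Fin n), ‖v‖^2 = ⟪v,v⟫ :=
        fun v => (real_inner_self_eq_norm_sq v).symm
      simp only [h, inner_sub_left, inner_sub_right]
      linarith [real_inner_comm p q, real_inner_comm p w, real_inner_comm p z,
        real_inner_comm q w, real_inner_comm q z, real_inner_comm w z]
    have hrev2 : ‖p - q‖^2 = ‖q - p‖^2 := by rw [norm_sub_rev]
    have hid' : c*‖q-z‖^2 + c*‖p-w‖^2 - c*‖p-z‖^2 - c*‖q-w‖^2
        = c*(2*⟪q-p, w-z⟫) := by linear_combination c * hid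
    have hrev2' : c*‖p - q‖^2 = c*‖q - p‖^2 := by rw [norm_sub_rev]
    have hkey : (2*c) * ‖q-p‖^2 ≤ (2*c) * ⟪q-p, w-z⟫ := by linarith
    exact le_of_mul_le_mul_left hkey (by positivity)
  have nonexp : ∀ z w : EuclideanSpace ℝ (Fin n), ‖prox w - prox z‖ ≤ ‖w - z‖ := by
    intro z w
    have h := firm z w
    have hCS : ⟪prox w - prox z, w - z⟫ ≤ ‖prox w - prox z‖ * ‖w - z‖ :=
      real_inner_le_norm _ _
    nlinarith [norm_nonneg (prox w - prox z), norm_nonneg (w - z)]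
  -- the gradient
  intro x
  rw [hasGradientAt_iff_isLittleO]
  have habs : ∀ z : EuclideanSpace ℝ (Fin n),
      |fμ z - fμ x - ⟪μ⁻¹ • (x - prox x), z - x⟫| ≤ (3*μ⁻¹) * ‖z - x‖^2 := by
    intro z
    have hub := upper x z
    have hlb := upper z x
    -- rewrite hlb
    have hdiff : ⟪μ⁻¹ • (z - prox z), x - z⟫
        = -⟪μ⁻¹ • (x - prox x), z - x⟫ - ⟪μ⁻¹ • ((z - prox z) - (x - prox x)), z - x⟫ := by
      rw [show x - z = -(z - x) by abel]
      simp only [inner_neg_right, real_inner_smul_left, inner_sub_left]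
      ring
    have hnorm2 : ‖x - z‖^2 = ‖z - x‖^2 := by rw [norm_sub_rev]
    have hbig : |⟪μ⁻¹ • ((z - prox z) - (x - prox x)), z - x⟫|
        ≤ (2*μ⁻¹) * ‖z - x‖^2 := by
      have h1 := abs_real_inner_le_norm (μ⁻¹ • ((z - prox z) - (x - prox x))) (z - x)
      have h2 : ‖μ⁻¹ • ((z - prox z) - (x - prox x))‖
          = μ⁻¹ * ‖(z - x) - (prox z - prox x)‖ := by
        rw [norm_smul, Real.norm_eq_abs, abs_of_pos (by positivity)]
        congr 2
        abel
      have h3 : ‖(z - x) - (prox z - prox x)‖ ≤ ‖z - x‖ + ‖prox z - prox x‖ :=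
        norm_sub_le _ _
      have h4 : ‖prox z - prox x‖ ≤ ‖z - x‖ := nonexp x z
      calc |⟪μ⁻¹ • ((z - prox z) - (x - prox x)), z - x⟫|
          ≤ ‖μ⁻¹ • ((z - prox z) - (x - prox x))‖ * ‖z - x‖ := h1
        _ ≤ (μ⁻¹ * (2*‖z - x‖)) * ‖z - x‖ := by
            rw [h2]
            have : μ⁻¹ * ‖(z - x) - (prox z - prox x)‖ ≤ μ⁻¹ * (2*‖z - x‖) := by
              apply mul_le_mul_of_nonneg_left (by linarith) (by positivity)
            exact mul_le_mul_of_nonneg_right this (norm_nonneg _)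
        _ = (2*μ⁻¹) * ‖z - x‖^2 := by ring
    have hcle : c ≤ μ⁻¹ := by
      have hinv : μ⁻¹ = 2*c := by rw [hcdef]; field_simp
      rw [hinv]; linarith
    rw [hdiff, hnorm2] at hlb
    rw [abs_le]
    have habs2 := abs_le.mp hbig
    constructor
    · nlinarith [habs2.1, norm_nonneg (z-x), sq_nonneg ‖z-x‖, mul_nonneg (le_of_lt (by positivity : (0:ℝ) < μ⁻¹)) (sq_nonneg ‖z-x‖)]
    · nlinarith [sq_nonneg ‖z-x‖, mul_nonneg (le_of_lt (by positivity : (0:ℝ) < μ⁻¹)) (sq_nonneg ‖z-x‖)]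
  rw [Asymptotics.isLittleO_iff]
  intro ε hε
  have hδ : 0 < ε / (3*μ⁻¹) := by positivity
  filter_upwards [Metric.ball_mem_nhds x hδ] with z hz
  have hz' : ‖z - x‖ < ε / (3*μ⁻¹) := by
    rwa [Metric.mem_ball, dist_eq_norm] at hz
  have h3μ : 0 < 3*μ⁻¹ := by positivity
  calc ‖fμ z - fμ x - ⟪μ⁻¹ • (x - prox x), z - x⟫‖
      = |fμ z - fμ x - ⟪μ⁻¹ • (x - prox x), z - x⟫| := rfl
    _ ≤ (3*μ⁻¹) * ‖z - x‖^2 := habs z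
    _ = ((3*μ⁻¹) * ‖z - x‖) * ‖z - x‖ := by ring
    _ ≤ ε * ‖z - x‖ := by
        apply mul_le_mul_of_nonneg_right _ (norm_nonneg _)
        have h2 : (3*μ⁻¹) * ‖z - x‖ ≤ (3*μ⁻¹) * (ε / (3*μ⁻¹)) :=
          mul_le_mul_of_nonneg_left hz'.le h3μ.le
        calc (3*μ⁻¹) * ‖z - x‖ ≤ (3*μ⁻¹) * (ε / (3*μ⁻¹)) := h2
          _ = ε := by field_simp
    _ = ε * ‖(fun z => z - x) z‖ := rfl
end

section
/- Let f : ℝⁿ → ℝ be convex and continuous, and let f_μ be its Moreau envelope with μ > 0. Then ∇f_μ is (1/μ)-Lipschitz: ‖∇f_μ(x) − ∇f_μ(y)‖ ≤ (1/μ)‖x − y‖ for all x, y. -/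
open RealInnerProductSpace Set Filter

section Aux
variable {E : Type*} [NormedAddCommGroup E] [InnerProductSpace ℝ E]

lemma grad_q [CompleteSpace E] (μ : ℝ) (x : E) :
    HasGradientAt (fun x : E => 1/(2*μ) * ‖x‖^2) ((1/μ) • x) x := by
  rw [hasGradientAt_iff_hasFDerivAt]
  have h1 : HasFDerivAt (fun x : E => ⟪x, x⟫)
      ((fderivInnerCLM ℝ (x, x)).comp ((ContinuousLinearMap.id ℝ E).prod (ContinuousLinearMap.id ℝ E))) x :=
    (hasFDerivAt_id x).inner ℝ (hasFDerivAt_id x)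
  have h2 := h1.const_mul (1/(2*μ))
  convert h2 using 1
  · rfl
  · funext y; rw [real_inner_self_eq_norm_sq]
  · ext v
    simp [InnerProductSpace.toDual_apply_apply, fderivInnerCLM, real_inner_smul_left, real_inner_comm x v]
    ring

lemma convex_first_order [CompleteSpace E] {φ : E → ℝ} (hφ : ConvexOn ℝ Set.univ φ)
    {x G : E} (h : HasGradientAt φ G x) (z : E) :
    φ x + ⟪G, z - x⟫ ≤ φ z := by
  set v := z - x with hv
  have hpath : ∀ t : ℝ, HasDerivAt (fun t : ℝ => x + t • v) v t := by
    intro t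
    simpa using ((hasDerivAt_id t).smul_const v).const_add x
  have hψ : HasDerivAt (fun t : ℝ => φ (x + t • v)) ⟪G, v⟫ 0 := by
    have hF : HasFDerivAt φ ((InnerProductSpace.toDual ℝ E) G) ((fun t : ℝ => x + t • v) 0) := by
      simpa using (hasGradientAt_iff_hasFDerivAt.1 h)
    have := hF.comp_hasDerivAt (0 : ℝ) (hpath 0)
    simp only [InnerProductSpace.toDual_apply_apply] at this
    exact this
  have hslope : ∀ t ∈ Ioc (0:ℝ) 1,
      slope (fun t : ℝ => φ (x + t • v)) 0 t ≤ φ z - φ x := by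
    intro t ht
    have hconv := hφ.2 (mem_univ x) (mem_univ z) (by linarith [ht.1, ht.2] : (0:ℝ) ≤ 1 - t)
      ht.1.le (by ring)
    have hxt : x + t • v = (1 - t) • x + t • z := by
      rw [hv]; module
    rw [slope_def_field]
    have : φ (x + t • v) ≤ (1 - t) * φ x + t * φ z := by rw [hxt]; simpa using hconv
    simp only [zero_smul, add_zero, sub_zero] at this ⊢
    rw [div_le_iff₀ ht.1]
    nlinarith [ht.1]
  have htend : Tendsto (slope (fun t : ℝ => φ (x + t • v)) 0) (nhdsWithin 0 (Ioi 0)) (nhds ⟪G, v⟫) := by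
    have := hasDerivAt_iff_tendsto_slope.1 hψ
    exact this.mono_left (nhdsWithin_mono 0 (fun t ht => ne_of_gt ht))
  have : ⟪G, v⟫ ≤ φ z - φ x := by
    refine le_of_tendsto htend ?_
    filter_upwards [Ioc_mem_nhdsGT_of_mem (by norm_num : (0:ℝ) ∈ Ico (0:ℝ) 1)] with t ht
    exact hslope t ht
  linarith

lemma affine_lower_bound [ProperSpace E] {f : E → ℝ}
    (hconv : ConvexOn ℝ Set.univ f) (hcont : Continuous f) :
    ∃ A : ℝ, 0 ≤ A ∧ ∀ y : E, -A * (1 + ‖y‖) ≤ f y := by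
  obtain ⟨w, hw, hwmin⟩ := (isCompact_closedBall (0:E) 1).exists_isMinOn
    ⟨0, by simp⟩ hcont.continuousOn
  set m := f w with hm
  refine ⟨|m| + |f 0|, by positivity, fun y => ?_⟩
  rcases le_or_gt ‖y‖ 1 with hy | hy
  · have h1 : m ≤ f y := hwmin (by simpa [Metric.mem_closedBall, dist_eq_norm] using hy)
    have : -|m| ≤ m := neg_abs_le m
    nlinarith [abs_nonneg m, abs_nonneg (f 0), norm_nonneg y]
  · have hy0 : (0:ℝ) < ‖y‖ := by linarith
    set a : ℝ := ‖y‖⁻¹ with ha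
    have ha0 : 0 < a := by positivity
    have ha1 : a < 1 := by rw [ha, inv_lt_one_iff₀]; right; exact hy
    have hu : ‖a • y‖ = 1 := by
      rw [norm_smul, ha, Real.norm_eq_abs, abs_of_pos ha0, inv_mul_cancel₀ hy0.ne']
    have humem : a • y ∈ Metric.closedBall (0:E) 1 := by
      simp [Metric.mem_closedBall, dist_eq_norm, hu]
    have h1 : m ≤ f (a • y) := hwmin humem
    have h2 : f (a • y) ≤ a * f y + (1 - a) * f 0 := by
      have := hconv.2 (mem_univ y) (mem_univ (0:E)) ha0.le (by linarith : (0:ℝ) ≤ 1 - a) (by ring)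
      simpa [smul_eq_mul] using this
    have key : ‖y‖ * m ≤ f y + (‖y‖ - 1) * f 0 := by
      have h3 : ‖y‖ * m ≤ ‖y‖ * (a * f y + (1 - a) * f 0) :=
        mul_le_mul_of_nonneg_left (h1.trans h2) hy0.le
      have h4 : ‖y‖ * a = 1 := by rw [ha, mul_inv_cancel₀ hy0.ne']
      have h5 : (‖y‖ * a - 1) * (f y - f 0) = 0 := by rw [h4]; ring
      nlinarith [h3, h5]
    nlinarith [neg_abs_le m, neg_abs_le (f 0), le_abs_self (f 0), abs_nonneg m, abs_nonneg (f 0)]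

omit [InnerProductSpace ℝ E] in
lemma env_bddBelow {f : E → ℝ} {A μ : ℝ} (hμ : 0 < μ) (hA : 0 ≤ A)
    (hlb : ∀ y : E, -A * (1 + ‖y‖) ≤ f y) (x : E) :
    BddBelow (Set.range fun y : E => f y + 1 / (2 * μ) * ‖y - x‖ ^ 2) := by
  refine ⟨-A * (1 + ‖x‖) - μ * A ^ 2 / 2, ?_⟩
  rintro v ⟨y, rfl⟩
  have h1 := hlb y
  have h2 : ‖y‖ ≤ ‖x‖ + ‖y - x‖ := by
    calc ‖y‖ = ‖x + (y - x)‖ := by rw [add_sub_cancel]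
    _ ≤ ‖x‖ + ‖y - x‖ := norm_add_le _ _
  have h3 : A * ‖y - x‖ - μ * A ^ 2 / 2 ≤ 1 / (2 * μ) * ‖y - x‖ ^ 2 := by
    rw [div_mul_eq_mul_div, le_div_iff₀ (by positivity)]
    nlinarith [sq_nonneg (‖y - x‖ - μ * A)]
  nlinarith [norm_nonneg (y - x), norm_nonneg x]

lemma env_convex {f fμ : E → ℝ} {μ : ℝ} (hμ : 0 < μ)
    (hconv : ConvexOn ℝ Set.univ f)
    (hfμ : ∀ x, fμ x = ⨅ y, f y + 1 / (2 * μ) * ‖y - x‖ ^ 2)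
    (hbdd : ∀ x : E, BddBelow (Set.range fun y : E => f y + 1 / (2 * μ) * ‖y - x‖ ^ 2)) :
    ConvexOn ℝ Set.univ fμ := by
  refine ⟨convex_univ, fun x₁ _ x₂ _ a b ha hb hab => ?_⟩
  rcases eq_or_lt_of_le ha with ha0 | ha
  · have hb1 : b = 1 := by linarith
    simp [← ha0, hb1]
  rcases eq_or_lt_of_le hb with hb0 | hb
  · have ha1 : a = 1 := by linarith
    simp [← hb0, ha1]
  refine le_of_forall_pos_le_add fun ε hε => ?_
  have h1 : (⨅ y, f y + 1 / (2 * μ) * ‖y - x₁‖ ^ 2) < fμ x₁ + ε := by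
    rw [hfμ x₁] at *; linarith
  have h2 : (⨅ y, f y + 1 / (2 * μ) * ‖y - x₂‖ ^ 2) < fμ x₂ + ε := by
    rw [hfμ x₂] at *; linarith
  obtain ⟨y₁, hy₁⟩ := exists_lt_of_ciInf_lt h1
  obtain ⟨y₂, hy₂⟩ := exists_lt_of_ciInf_lt h2
  have hle : fμ (a • x₁ + b • x₂) ≤ f (a • y₁ + b • y₂)
      + 1 / (2 * μ) * ‖(a • y₁ + b • y₂) - (a • x₁ + b • x₂)‖ ^ 2 := by
    rw [hfμ]
    exact ciInf_le (hbdd _) _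
  have hf : f (a • y₁ + b • y₂) ≤ a * f y₁ + b * f y₂ := by
    simpa [smul_eq_mul] using hconv.2 (mem_univ y₁) (mem_univ y₂) ha.le hb.le hab
  have hv : (a • y₁ + b • y₂) - (a • x₁ + b • x₂) = a • (y₁ - x₁) + b • (y₂ - x₂) := by
    module
  have hnorm : ‖(a • y₁ + b • y₂) - (a • x₁ + b • x₂)‖ ^ 2
      ≤ a * ‖y₁ - x₁‖ ^ 2 + b * ‖y₂ - x₂‖ ^ 2 := by
    have h3 : ‖a • (y₁ - x₁) + b • (y₂ - x₂)‖ ≤ a * ‖y₁ - x₁‖ + b * ‖y₂ - x₂‖ := by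
      refine (norm_add_le _ _).trans ?_
      rw [norm_smul, norm_smul, Real.norm_eq_abs, Real.norm_eq_abs,
        abs_of_pos ha, abs_of_pos hb]
    rw [hv]
    have h4 : ‖a • (y₁ - x₁) + b • (y₂ - x₂)‖ ^ 2 ≤ (a * ‖y₁ - x₁‖ + b * ‖y₂ - x₂‖) ^ 2 :=
      pow_le_pow_left₀ (norm_nonneg _) h3 2
    nlinarith [sq_nonneg (‖y₁ - x₁‖ - ‖y₂ - x₂‖), mul_pos ha hb]
  have hc : (0:ℝ) < 1 / (2 * μ) := by positivity
  calc fμ (a • x₁ + b • x₂)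
      ≤ f (a • y₁ + b • y₂) + 1 / (2 * μ) * ‖(a • y₁ + b • y₂) - (a • x₁ + b • x₂)‖ ^ 2 := hle
    _ ≤ a * f y₁ + b * f y₂ + 1 / (2 * μ) * (a * ‖y₁ - x₁‖ ^ 2 + b * ‖y₂ - x₂‖ ^ 2) := by
        nlinarith [hc, hnorm]
    _ = a * (f y₁ + 1 / (2 * μ) * ‖y₁ - x₁‖ ^ 2) + b * (f y₂ + 1 / (2 * μ) * ‖y₂ - x₂‖ ^ 2) := by
        ring
    _ ≤ a * (fμ x₁ + ε) + b * (fμ x₂ + ε) := by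
        have := mul_le_mul_of_nonneg_left hy₁.le ha.le
        have := mul_le_mul_of_nonneg_left hy₂.le hb.le
        linarith
    _ = a • fμ x₁ + b • fμ x₂ + ε := by simp only [smul_eq_mul]; nlinarith [hab]

lemma quad_sub_env_convex {f fμ : E → ℝ} {μ : ℝ} (hμ : 0 < μ)
    (hfμ : ∀ x, fμ x = ⨅ y, f y + 1 / (2 * μ) * ‖y - x‖ ^ 2)
    (hbdd : ∀ x : E, BddBelow (Set.range fun y : E => f y + 1 / (2 * μ) * ‖y - x‖ ^ 2)) :
    ConvexOn ℝ Set.univ (fun x : E => 1 / (2 * μ) * ‖x‖ ^ 2 - fμ x) := by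
  refine ⟨convex_univ, fun x₁ _ x₂ _ a b ha hb hab => ?_⟩
  simp only [smul_eq_mul]
  set z := a • x₁ + b • x₂ with hz
  have key : a * fμ x₁ + b * fμ x₂
      - (a * (1/(2*μ) * ‖x₁‖^2) + b * (1/(2*μ) * ‖x₂‖^2) - 1/(2*μ) * ‖z‖^2) ≤ fμ z := by
    rw [hfμ z]
    refine le_ciInf fun y => ?_
    have h1 : fμ x₁ ≤ f y + 1 / (2 * μ) * ‖y - x₁‖ ^ 2 := by
      rw [hfμ x₁]; exact ciInf_le (hbdd _) _
    have h2 : fμ x₂ ≤ f y + 1 / (2 * μ) * ‖y - x₂‖ ^ 2 := by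
      rw [hfμ x₂]; exact ciInf_le (hbdd _) _
    have hid : a * ‖y - x₁‖^2 + b * ‖y - x₂‖^2
        = ‖y - z‖^2 + a * ‖x₁‖^2 + b * ‖x₂‖^2 - ‖z‖^2 := by
      have e1 := norm_sub_sq_real y x₁
      have e2 := norm_sub_sq_real y x₂
      have e3 := norm_sub_sq_real y z
      have e4 : ⟪y, z⟫ = a * ⟪y, x₁⟫ + b * ⟪y, x₂⟫ := by
        rw [hz, inner_add_right, real_inner_smul_right, real_inner_smul_right]
      nlinarith [e1, e2, e3, e4, hab]
    have hc : (0:ℝ) < 1 / (2 * μ) := by positivity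
    have h3 := mul_le_mul_of_nonneg_left h1 ha
    have h4 := mul_le_mul_of_nonneg_left h2 hb
    have e5 : a * f y + b * f y = f y := by linear_combination f y * hab
    have e6 : 1/(2*μ) * (a * ‖y - x₁‖^2 + b * ‖y - x₂‖^2)
        = 1/(2*μ) * (‖y - z‖^2 + a * ‖x₁‖^2 + b * ‖x₂‖^2 - ‖z‖^2) := by rw [hid]
    linarith [h3, h4, e5, e6]
  linarith [key]

end Aux

/-- The gradient of the Moreau envelope `f_μ` of a convex continuous function is
`(1/μ)`-Lipschitz. -/
theorem moreau_envelope_gradient_lipschitz {n : ℕ}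
    (f fμ : EuclideanSpace ℝ (Fin n) → ℝ)
    (g : EuclideanSpace ℝ (Fin n) → EuclideanSpace ℝ (Fin n))
    (μ : ℝ) (hμ : 0 < μ)
    (hconv : ConvexOn ℝ Set.univ f) (hcont : Continuous f)
    (hfμ : ∀ x, fμ x = ⨅ y, f y + 1 / (2 * μ) * ‖y - x‖ ^ 2)
    (hg : ∀ x, HasGradientAt fμ (g x) x) :
    ∀ x y, ‖g x - g y‖ ≤ 1 / μ * ‖x - y‖ := by
  obtain ⟨A, hA, hlb⟩ := affine_lower_bound hconv hcont
  have hbdd : ∀ x : EuclideanSpace ℝ (Fin n),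
      BddBelow (Set.range fun y => f y + 1 / (2 * μ) * ‖y - x‖ ^ 2) :=
    env_bddBelow hμ hA hlb
  have hfμconv : ConvexOn ℝ Set.univ fμ := env_convex hμ hconv hfμ hbdd
  have hhconv : ConvexOn ℝ Set.univ
      (fun x : EuclideanSpace ℝ (Fin n) => 1 / (2 * μ) * ‖x‖ ^ 2 - fμ x) :=
    quad_sub_env_convex hμ hfμ hbdd
  have hgradh : ∀ x : EuclideanSpace ℝ (Fin n),
      HasGradientAt (fun x : EuclideanSpace ℝ (Fin n) => 1 / (2 * μ) * ‖x‖ ^ 2 - fμ x)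
      ((1/μ) • x - g x) x := by
    intro x
    rw [hasGradientAt_iff_hasFDerivAt, map_sub]
    exact (hasGradientAt_iff_hasFDerivAt.1 (grad_q μ x)).sub
      (hasGradientAt_iff_hasFDerivAt.1 (hg x))
  have ineq1 : ∀ x z : EuclideanSpace ℝ (Fin n), fμ x + ⟪g x, z - x⟫ ≤ fμ z :=
    fun x z => convex_first_order hfμconv (hg x) z
  have descent : ∀ x z : EuclideanSpace ℝ (Fin n),
      fμ z ≤ fμ x + ⟪g x, z - x⟫ + 1 / (2 * μ) * ‖z - x‖ ^ 2 := by
    intro x z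
    have h2 := convex_first_order hhconv (hgradh x) z
    have e1 : ⟪(1/μ) • x - g x, z - x⟫ = (1/μ) * ⟪x, z - x⟫ - ⟪g x, z - x⟫ := by
      rw [inner_sub_left, real_inner_smul_left]
    have e2 : 1 / (2 * μ) * ‖z‖ ^ 2 - 1 / (2 * μ) * ‖x‖ ^ 2 - (1/μ) * ⟪x, z - x⟫
        = 1 / (2 * μ) * ‖z - x‖ ^ 2 := by
      rw [inner_sub_right, real_inner_self_eq_norm_sq, norm_sub_sq_real z x,
        real_inner_comm x z]
      field_simp
      ring
    linarith [h2, e1.le, e1.ge, e2.le, e2.ge]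
  have strong : ∀ x z : EuclideanSpace ℝ (Fin n),
      fμ x + ⟪g x, z - x⟫ + μ / 2 * ‖g z - g x‖ ^ 2 ≤ fμ z := by
    intro x z
    set d := g z - g x with hd
    set u := z - μ • d with hu
    have h1 : fμ x + ⟪g x, u - x⟫ ≤ fμ u := ineq1 x u
    have h2 : fμ u ≤ fμ z + ⟪g z, u - z⟫ + 1 / (2 * μ) * ‖u - z‖ ^ 2 := descent z u
    have e1 : u - z = -(μ • d) := by rw [hu]; abel
    have e2 : ⟪g z, u - z⟫ = -(μ * ⟪g z, d⟫) := by
      rw [e1, inner_neg_right, real_inner_smul_right]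
    have e3 : ‖u - z‖ ^ 2 = μ^2 * ‖d‖ ^ 2 := by
      rw [e1, norm_neg, norm_smul, Real.norm_eq_abs, mul_pow, sq_abs]
    have e4 : ⟪g x, u - x⟫ = ⟪g x, z - x⟫ - μ * ⟪g x, d⟫ := by
      have : u - x = (z - x) - μ • d := by rw [hu]; abel
      rw [this, inner_sub_right, real_inner_smul_right]
    have e5 : ⟪g z, d⟫ - ⟪g x, d⟫ = ‖d‖ ^ 2 := by
      rw [← inner_sub_left, ← hd, real_inner_self_eq_norm_sq]
    have e7 : μ * ⟪g z, d⟫ - μ * ⟪g x, d⟫ = μ * ‖d‖ ^ 2 := by linear_combination μ * e5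
    have e8 : 1 / (2 * μ) * ‖u - z‖ ^ 2 = μ / 2 * ‖d‖ ^ 2 := by
      rw [e3]; field_simp
    linarith [h1, h2, e2.le, e2.ge, e4.le, e4.ge, e7.le, e7.ge, e8.le, e8.ge]
  intro x y
  have s1 := strong x y
  have s2 := strong y x
  have e1 : ⟪g y, x - y⟫ = -⟪g y, y - x⟫ := by
    rw [← inner_neg_right]; congr 1; abel
  have e2 : ⟪g x, y - x⟫ - ⟪g y, y - x⟫ = ⟪g x - g y, y - x⟫ := (inner_sub_left _ _ _).symm
  have e3 : ‖g y - g x‖ ^ 2 = ‖g x - g y‖ ^ 2 := by rw [norm_sub_rev]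
  have e4 : ⟪g x - g y, y - x⟫ = -⟪g x - g y, x - y⟫ := by
    rw [← inner_neg_right]; congr 1; abel
  have cs : ⟪g x - g y, x - y⟫ ≤ ‖g x - g y‖ * ‖x - y‖ := real_inner_le_norm _ _
  have e3' : μ / 2 * ‖g y - g x‖ ^ 2 = μ / 2 * ‖g x - g y‖ ^ 2 := by rw [e3]
  have key : μ * ‖g x - g y‖ ^ 2 ≤ ‖g x - g y‖ * ‖x - y‖ := by
    linarith [s1, s2, e1.le, e1.ge, e2.le, e2.ge, e3'.le, e3'.ge, e4.le, e4.ge, cs]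
  rcases eq_or_lt_of_le (norm_nonneg (g x - g y)) with h0 | h0
  · rw [← h0]; positivity
  · have h5 : ‖g x - g y‖ * (μ * ‖g x - g y‖) ≤ ‖g x - g y‖ * ‖x - y‖ := by
      nlinarith [key]
    have h6 : μ * ‖g x - g y‖ ≤ ‖x - y‖ := le_of_mul_le_mul_left h5 h0
    rw [one_div, inv_mul_eq_div, le_div_iff₀ hμ]
    linarith
end
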